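/- arXiv:1005.1409 — 2 statements merged into one kernel-verified Lean document; each statement's English description precedes it below -/
import Mathlib

section
/- Let n ≥ 1 and let K and L be nonempty compact convex subsets of ℝⁿ with vol(K) = vol(L) = 1. If c ∈ ℝ is such that (vol(K + εL) − vol(K))/ε → c as ε → 0⁺, then c ≥ n. -/
open MeasureTheory Pointwise ENNReal Set
open scoped NNReal

/-!
The one-dimensional Prékopa–Leindler inequality follows from the one-dimensional Brunn–Minkowski
inequality `|A| + |B| ≤ |A + B|` applied to the superlevel sets of two functions normalised to the
same supremum, integrated over the level and combined with weighted AM–GM. By Fubini it passes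
to products, hence to `ℝⁿ`, and for indicator functions it gives
`vol((1 - t) K + t L) ≥ vol(K) ^ (1 - t) * vol(L) ^ t = 1`. With `t = ε / (1 + ε)` one has
`K + ε L = (1 + ε) ((1 - t) K + t L)`, so `vol(K + ε L) ≥ (1 + ε) ^ n ≥ 1 + n ε` and every
difference quotient is at least `n`.
-/

theorem ENNReal.min_le_rpow_mul_rpow {t : ℝ} (ht₀ : 0 ≤ t) (ht₁ : t ≤ 1) (a b : ℝ≥0∞) :
    min a b ≤ a ^ (1 - t) * b ^ t := by
  calc min a b = min a b ^ (1 - t) * min a b ^ t := by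
        rw [← ENNReal.rpow_add_of_nonneg _ _ (by linarith) ht₀]; norm_num
    _ ≤ a ^ (1 - t) * b ^ t := by gcongr <;> simp

theorem ENNReal.rpow_mul_rpow_le_add {t : ℝ} (ht₀ : 0 < t) (ht₁ : t < 1) (a b : ℝ≥0∞) :
    a ^ (1 - t) * b ^ t ≤ ENNReal.ofReal (1 - t) * a + ENNReal.ofReal t * b := by
  rcases eq_or_ne a ∞ with rfl | ha
  · simp [ENNReal.mul_top, ht₁]
  rcases eq_or_ne b ∞ with rfl | hb
  · simp [ENNReal.mul_top, ht₀]
  lift a to ℝ≥0 using ha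
  lift b to ℝ≥0 using hb
  have := NNReal.geom_mean_le_arith_mean2_weighted (1 - t).toNNReal t.toNNReal a b
    (by rw [← Real.toNNReal_add (by linarith) ht₀.le]; simp)
  rw [Real.coe_toNNReal _ (by linarith), Real.coe_toNNReal _ ht₀.le] at this
  rw [← ENNReal.coe_rpow_of_nonneg _ (by linarith), ← ENNReal.coe_rpow_of_nonneg _ ht₀.le]
  simp only [ENNReal.ofReal]
  exact_mod_cast this

theorem ENNReal.mul_rpow_mul_mul_rpow {t : ℝ} (ht₀ : 0 ≤ t) (ht₁ : t ≤ 1) (a b x y : ℝ≥0∞) :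
    (a * x) ^ (1 - t) * (b * y) ^ t = a ^ (1 - t) * b ^ t * (x ^ (1 - t) * y ^ t) := by
  rw [mul_rpow_of_nonneg _ _ (by linarith), mul_rpow_of_nonneg _ _ ht₀, mul_mul_mul_comm]

theorem ENNReal.iSup_rpow {ι : Sort*} {y : ℝ} (hy : 0 < y) (f : ι → ℝ≥0∞) :
    (⨆ i, f i) ^ y = ⨆ i, f i ^ y :=
  (orderIsoRpow y hy).map_iSup f

theorem lintegral_eq_lintegral_meas_ofReal_lt {α : Type*} [MeasurableSpace α] (μ : Measure α)
    {f : α → ℝ≥0∞} (hf : Measurable f) (hf_top : ∀ x, f x ≠ ∞) :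
    ∫⁻ x, f x ∂μ = ∫⁻ r in Ioi 0, μ {x | ENNReal.ofReal r < f x} := by
  calc ∫⁻ x, f x ∂μ = ∫⁻ x, ENNReal.ofReal (f x).toReal ∂μ := by simp [hf_top]
    _ = ∫⁻ r in Ioi 0, μ {x | r < (f x).toReal} :=
        lintegral_eq_lintegral_meas_lt μ (ae_of_all _ fun _ => toReal_nonneg)
          hf.ennreal_toReal.aemeasurable
    _ = ∫⁻ r in Ioi 0, μ {x | ENNReal.ofReal r < f x} :=
        setLIntegral_congr_fun measurableSet_Ioi fun r hr => by
          simp_rw [ENNReal.ofReal_lt_iff_lt_toReal (le_of_lt hr) (hf_top _)]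

theorem lintegral_eq_iSup_lintegral_min_natCast {α : Type*} [MeasurableSpace α] (μ : Measure α)
    {f : α → ℝ≥0∞} (hf : Measurable f) : ∫⁻ x, f x ∂μ = ⨆ N : ℕ, ∫⁻ x, min (f x) N ∂μ := by
  rw [← lintegral_iSup (fun N => hf.min measurable_const)
    fun N M hNM x => min_le_min_left _ (Nat.cast_le.2 hNM)]
  simp_rw [← inf_iSup_eq, ENNReal.iSup_natCast, inf_top_eq]

theorem Real.volume_add_volume_le_volume_add_of_isCompact {A B : Set ℝ} (hA : IsCompact A)
    (hB : IsCompact B) (hA₀ : A.Nonempty) (hB₀ : B.Nonempty) :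
    volume A + volume B ≤ volume (A + B) := by
  set a := sSup A
  set b := sInf B
  have hinter : (b +ᵥ A) ∩ (a +ᵥ B) ⊆ {a + b} := by
    rintro _ ⟨⟨x, hx, rfl⟩, ⟨y, hy, hxy⟩⟩
    have : x ≤ a := le_csSup hA.bddAbove hx
    have : b ≤ y := csInf_le hB.bddBelow hy
    simp only [vadd_eq_add] at hxy ⊢
    rw [mem_singleton_iff]
    linarith
  have hunion : (b +ᵥ A) ∪ (a +ᵥ B) ⊆ A + B := by
    rintro _ (⟨x, hx, rfl⟩ | ⟨y, hy, rfl⟩)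
    · exact ⟨x, hx, b, hB.sInf_mem hB₀, add_comm x b⟩
    · exact ⟨a, hA.sSup_mem hA₀, y, hy, rfl⟩
  calc volume A + volume B = volume (b +ᵥ A) + volume (a +ᵥ B) := by
        rw [measure_vadd, measure_vadd]
    _ = volume ((b +ᵥ A) ∪ (a +ᵥ B)) := by
        rw [measure_union₀ (hB.measurableSet.const_vadd a).nullMeasurableSet
          (measure_mono_null hinter Real.volume_singleton)]
    _ ≤ volume (A + B) := measure_mono hunion

theorem Real.volume_add_volume_le_volume_add {A B : Set ℝ} (hA : MeasurableSet A)
    (hB : MeasurableSet B) (hA₀ : A.Nonempty) (hB₀ : B.Nonempty) :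
    volume A + volume B ≤ volume (A + B) := by
  obtain ⟨a, ha⟩ := hA₀
  obtain ⟨b, hb⟩ := hB₀
  rw [hA.measure_eq_iSup_isCompact, hB.measure_eq_iSup_isCompact]
  simp only [iSup_and']
  refine ENNReal.biSup_add_biSup_le' ⟨∅, empty_subset _, isCompact_empty⟩
    ⟨∅, empty_subset _, isCompact_empty⟩ fun K₁ ⟨hK₁A, hK₁⟩ K₂ ⟨hK₂B, hK₂⟩ => ?_
  -- adding a point makes the compact sets nonempty without decreasing their measure
  calc volume K₁ + volume K₂ ≤ volume (insert a K₁) + volume (insert b K₂) := by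
        gcongr <;> exact subset_insert _ _
    _ ≤ volume (insert a K₁ + insert b K₂) :=
        volume_add_volume_le_volume_add_of_isCompact (hK₁.insert a) (hK₂.insert b)
          (insert_nonempty _ _) (insert_nonempty _ _)
    _ ≤ volume (A + B) := measure_mono (add_subset_add (insert_subset ha hK₁A)
          (insert_subset hb hK₂B))

theorem Real.volume_smul_add_smul_setOf_lt {t : ℝ} (ht₀ : 0 ≤ t) (ht₁ : t ≤ 1)
    {f g h : ℝ → ℝ≥0∞} (hf : Measurable f) (hg : Measurable g)
    (hfgh : ∀ x y, min (f x) (g y) ≤ h ((1 - t) * x + t * y)) {ρ : ℝ≥0∞}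
    (hρf : {x | ρ < f x}.Nonempty) (hρg : {y | ρ < g y}.Nonempty) :
    ENNReal.ofReal (1 - t) * volume {x | ρ < f x} + ENNReal.ofReal t * volume {y | ρ < g y} ≤
      volume {z | ρ < h z} := by
  have hsub : (1 - t) • {x | ρ < f x} + t • {y | ρ < g y} ⊆ {z | ρ < h z} := by
    rintro _ ⟨_, ⟨x, hx, rfl⟩, _, ⟨y, hy, rfl⟩, rfl⟩
    exact (lt_min hx hy).trans_le (hfgh x y)
  calc ENNReal.ofReal (1 - t) * volume {x | ρ < f x} + ENNReal.ofReal t * volume {y | ρ < g y}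
      = volume ((1 - t) • {x | ρ < f x}) + volume (t • {y | ρ < g y}) := by
        simp only [Measure.addHaar_smul_of_nonneg volume (by linarith : 0 ≤ 1 - t),
          Measure.addHaar_smul_of_nonneg volume ht₀, Module.finrank_self, pow_one]
    _ ≤ volume ((1 - t) • {x | ρ < f x} + t • {y | ρ < g y}) :=
        volume_add_volume_le_volume_add ((hf measurableSet_Ioi).const_smul₀ _)
          ((hg measurableSet_Ioi).const_smul₀ _) hρf.smul_set hρg.smul_set
    _ ≤ volume {z | ρ < h z} := measure_mono hsub

theorem Real.add_lintegral_le_lintegral_of_iSup_eq {t : ℝ} (ht₀ : 0 ≤ t) (ht₁ : t ≤ 1)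
    {f g h : ℝ → ℝ≥0∞} (hf : Measurable f) (hg : Measurable g) (hh : Measurable h)
    (hfg : ⨆ x, f x = ⨆ y, g y) (hf_top : ⨆ x, f x ≠ ∞)
    (hfgh : ∀ x y, f x ^ (1 - t) * g y ^ t ≤ h ((1 - t) * x + t * y)) :
    ENNReal.ofReal (1 - t) * (∫⁻ x, f x) + ENNReal.ofReal t * (∫⁻ y, g y) ≤ ∫⁻ z, h z := by
  set s := ⨆ x, f x
  have hfs (x : ℝ) : f x ≤ s := le_iSup f x
  have hgs (y : ℝ) : g y ≤ s := hfg ▸ le_iSup g y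
  -- truncating `h` at `s` makes it finite and leaves its superlevel sets below `s` unchanged
  set h' := fun z => min (h z) s
  have hmin (x y : ℝ) : min (f x) (g y) ≤ h' ((1 - t) * x + t * y) :=
    le_min ((min_le_rpow_mul_rpow ht₀ ht₁ _ _).trans (hfgh x y)) (min_le_of_left_le (hfs x))
  have hlevel (r : ℝ) : ENNReal.ofReal (1 - t) * volume {x | ENNReal.ofReal r < f x} +
      ENNReal.ofReal t * volume {y | ENNReal.ofReal r < g y} ≤
        volume {z | ENNReal.ofReal r < h' z} := by
    by_cases hr : ENNReal.ofReal r < s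
    · have hr' : ENNReal.ofReal r < ⨆ y, g y := hfg ▸ hr
      exact volume_smul_add_smul_setOf_lt ht₀ ht₁ hf hg hmin (lt_iSup_iff.1 hr) (lt_iSup_iff.1 hr')
    · have hf₀ : {x | ENNReal.ofReal r < f x} = ∅ :=
        eq_empty_of_forall_notMem fun x hx => hr (hx.trans_le (hfs x))
      have hg₀ : {y | ENNReal.ofReal r < g y} = ∅ :=
        eq_empty_of_forall_notMem fun y hy => hr (hy.trans_le (hgs y))
      simp [hf₀, hg₀]
  have hs_top {φ : ℝ → ℝ≥0∞} (hφ : ∀ x, φ x ≤ s) (x : ℝ) : φ x ≠ ∞ :=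
    ne_top_of_le_ne_top hf_top (hφ x)
  calc ENNReal.ofReal (1 - t) * (∫⁻ x, f x) + ENNReal.ofReal t * ∫⁻ y, g y
      = (∫⁻ r in Ioi 0, ENNReal.ofReal (1 - t) * volume {x | ENNReal.ofReal r < f x}) +
          ∫⁻ r in Ioi 0, ENNReal.ofReal t * volume {y | ENNReal.ofReal r < g y} := by
        rw [lintegral_eq_lintegral_meas_ofReal_lt _ hf (hs_top hfs),
          lintegral_eq_lintegral_meas_ofReal_lt _ hg (hs_top hgs),
          lintegral_const_mul' _ _ ofReal_ne_top, lintegral_const_mul' _ _ ofReal_ne_top]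
    _ ≤ ∫⁻ r in Ioi 0, volume {z | ENNReal.ofReal r < h' z} :=
        (le_lintegral_add _ _).trans (setLIntegral_mono' measurableSet_Ioi fun r _ => hlevel r)
    _ = ∫⁻ z, h' z :=
        (lintegral_eq_lintegral_meas_ofReal_lt _ (hh.min measurable_const)
          (hs_top fun _ => min_le_right _ _)).symm
    _ ≤ ∫⁻ z, h z := lintegral_mono fun _ => min_le_left _ _

theorem Real.lintegral_rpow_mul_lintegral_rpow_le_of_iSup_ne_top {t : ℝ} (ht₀ : 0 < t)
    (ht₁ : t < 1) {f g h : ℝ → ℝ≥0∞} (hf : Measurable f) (hg : Measurable g) (hh : Measurable h)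
    (hf_top : ⨆ x, f x ≠ ∞) (hg_top : ⨆ y, g y ≠ ∞)
    (hfgh : ∀ x y, f x ^ (1 - t) * g y ^ t ≤ h ((1 - t) * x + t * y)) :
    (∫⁻ x, f x) ^ (1 - t) * (∫⁻ y, g y) ^ t ≤ ∫⁻ z, h z := by
  set a := ⨆ x, f x
  set b := ⨆ y, g y
  rcases eq_or_ne a 0 with ha | ha
  · simp [ENNReal.iSup_eq_zero.1 ha, zero_rpow_of_pos (sub_pos.2 ht₁)]
  rcases eq_or_ne b 0 with hb | hb
  · simp [ENNReal.iSup_eq_zero.1 hb, zero_rpow_of_pos ht₀]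
  -- after rescaling `f` and `g` to supremum `1`, weighted AM–GM turns the additive bound into
  -- the multiplicative one
  set c := a⁻¹ ^ (1 - t) * b⁻¹ ^ t
  have hc₀ : c ≠ 0 := by simp [c, ha, hb, hf_top, hg_top, ht₀]
  have hc_top : c ≠ ∞ := mul_ne_top (rpow_ne_top_of_nonneg (by linarith) (inv_ne_top.2 ha))
    (rpow_ne_top_of_nonneg ht₀.le (inv_ne_top.2 hb))
  have hsup : (⨆ x, a⁻¹ * f x) = ⨆ y, b⁻¹ * g y := by
    rw [← ENNReal.mul_iSup, ← ENNReal.mul_iSup, ENNReal.inv_mul_cancel ha hf_top,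
      ENNReal.inv_mul_cancel hb hg_top]
  have key := add_lintegral_le_lintegral_of_iSup_eq ht₀.le ht₁.le (hf.const_mul a⁻¹)
    (hg.const_mul b⁻¹) (hh.const_mul c) hsup
    (by rw [← ENNReal.mul_iSup, ENNReal.inv_mul_cancel ha hf_top]; exact one_ne_top)
    fun x y => by
      rw [ENNReal.mul_rpow_mul_mul_rpow ht₀.le ht₁.le]
      gcongr
      exact hfgh x y
  rw [lintegral_const_mul _ hf, lintegral_const_mul _ hg, lintegral_const_mul _ hh] at key
  refine (ENNReal.mul_le_mul_iff_right hc₀ hc_top).1 ?_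
  calc c * ((∫⁻ x, f x) ^ (1 - t) * (∫⁻ y, g y) ^ t)
      = (a⁻¹ * ∫⁻ x, f x) ^ (1 - t) * (b⁻¹ * ∫⁻ y, g y) ^ t :=
        (ENNReal.mul_rpow_mul_mul_rpow ht₀.le ht₁.le _ _ _ _).symm
    _ ≤ _ := rpow_mul_rpow_le_add ht₀ ht₁ _ _
    _ ≤ c * ∫⁻ z, h z := key

theorem Real.lintegral_rpow_mul_lintegral_rpow_le {t : ℝ} (ht₀ : 0 < t) (ht₁ : t < 1)
    {f g h : ℝ → ℝ≥0∞} (hf : Measurable f) (hg : Measurable g) (hh : Measurable h)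
    (hfgh : ∀ x y, f x ^ (1 - t) * g y ^ t ≤ h ((1 - t) * x + t * y)) :
    (∫⁻ x, f x) ^ (1 - t) * (∫⁻ y, g y) ^ t ≤ ∫⁻ z, h z := by
  have htrunc (N M : ℕ) :
      (∫⁻ x, min (f x) N) ^ (1 - t) * (∫⁻ y, min (g y) M) ^ t ≤ ∫⁻ z, h z := by
    refine lintegral_rpow_mul_lintegral_rpow_le_of_iSup_ne_top ht₀ ht₁
      (hf.min measurable_const) (hg.min measurable_const) hh
      (ne_top_of_le_ne_top (natCast_ne_top N) (iSup_le fun _ => min_le_right _ _))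
      (ne_top_of_le_ne_top (natCast_ne_top M) (iSup_le fun _ => min_le_right _ _))
      fun x y => (?_ : _ ≤ _).trans (hfgh x y)
    gcongr <;> first | linarith | exact min_le_left _ _
  rw [lintegral_eq_iSup_lintegral_min_natCast _ hf, lintegral_eq_iSup_lintegral_min_natCast _ hg,
    iSup_rpow (sub_pos.2 ht₁), iSup_rpow ht₀, ENNReal.iSup_mul]
  exact iSup_le fun N => (ENNReal.mul_iSup _ _).trans_le (iSup_le (htrunc N))

def PrekopaLeindler (t : ℝ) (E : Type*) [MeasurableSpace E] [Add E] [SMul ℝ E]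
    (μ : Measure E) : Prop :=
  ∀ f g h : E → ℝ≥0∞, Measurable f → Measurable g → Measurable h →
    (∀ x y, f x ^ (1 - t) * g y ^ t ≤ h ((1 - t) • x + t • y)) →
    (∫⁻ x, f x ∂μ) ^ (1 - t) * (∫⁻ y, g y ∂μ) ^ t ≤ ∫⁻ z, h z ∂μ

namespace PrekopaLeindler

variable {t : ℝ} {E F : Type*} [MeasurableSpace E] [Add E] [SMul ℝ E]
  [MeasurableSpace F] [Add F] [SMul ℝ F] {μ : Measure E} {ν : Measure F}

theorem real (ht₀ : 0 < t) (ht₁ : t < 1) : PrekopaLeindler t ℝ volume :=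
  fun _ _ _ hf hg hh hfgh => Real.lintegral_rpow_mul_lintegral_rpow_le ht₀ ht₁ hf hg hh hfgh

theorem of_measurePreserving (hν : PrekopaLeindler t F ν) (e : E ≃ᵐ F)
    (he : MeasurePreserving e μ ν)
    (he_comb : ∀ x y, e ((1 - t) • x + t • y) = (1 - t) • e x + t • e y) :
    PrekopaLeindler t E μ := by
  intro f g h hf hg hh hfgh
  have hsymm_comb (x y : F) : e.symm ((1 - t) • x + t • y) = (1 - t) • e.symm x + t • e.symm y :=
    e.injective (by simp [he_comb])
  have key := hν (fun x => f (e.symm x)) (fun y => g (e.symm y)) (fun z => h (e.symm z))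
    (hf.comp e.symm.measurable) (hg.comp e.symm.measurable) (hh.comp e.symm.measurable)
    fun x y => by simpa only [hsymm_comb] using hfgh (e.symm x) (e.symm y)
  simpa only [← he.symm.lintegral_comp_emb e.symm.measurableEmbedding] using key

theorem prod [SFinite ν] (hμ : PrekopaLeindler t E μ) (hν : PrekopaLeindler t F ν) :
    PrekopaLeindler t (E × F) (μ.prod ν) := by
  intro f g h hf hg hh hfgh
  have hfiber (x₀ y₀ : E) : (∫⁻ u, f (x₀, u) ∂ν) ^ (1 - t) * (∫⁻ v, g (y₀, v) ∂ν) ^ t ≤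
      ∫⁻ w, h ((1 - t) • x₀ + t • y₀, w) ∂ν :=
    hν _ _ _ (hf.comp measurable_prodMk_left) (hg.comp measurable_prodMk_left)
      (hh.comp measurable_prodMk_left) fun u v => hfgh (x₀, u) (y₀, v)
  rw [lintegral_prod f hf.aemeasurable, lintegral_prod g hg.aemeasurable,
    lintegral_prod h hh.aemeasurable]
  exact hμ _ _ _ hf.lintegral_prod_right' hg.lintegral_prod_right' hh.lintegral_prod_right' hfiber

theorem pi (ht₀ : 0 < t) (ht₁ : t < 1) : ∀ n : ℕ, PrekopaLeindler t (Fin n → ℝ) volume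
  | 0 => fun f g h _ _ _ hfgh => by
    simp only [lintegral_unique, volume_pi, Measure.pi_univ, Finset.univ_eq_empty,
      Finset.prod_empty, mul_one]
    convert hfgh default default
  | n + 1 => ((real ht₀ ht₁).prod (pi ht₀ ht₁ n)).of_measurePreserving
      (MeasurableEquiv.piFinSuccAbove (fun _ => ℝ) 0)
      (volume_preserving_piFinSuccAbove (fun _ => ℝ) 0) fun _ _ => rfl

theorem euclideanSpace (ht₀ : 0 < t) (ht₁ : t < 1) (n : ℕ) :
    PrekopaLeindler t (EuclideanSpace ℝ (Fin n)) volume :=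
  (pi ht₀ ht₁ n).of_measurePreserving (MeasurableEquiv.toLp 2 (Fin n → ℝ)).symm
    (EuclideanSpace.volume_preserving_symm_measurableEquiv_toLp (Fin n)) fun _ _ => rfl

theorem measure_rpow_mul_measure_rpow_le (hμ : PrekopaLeindler t E μ) (ht₀ : 0 < t)
    (ht₁ : t < 1) {A B : Set E} (hA : MeasurableSet A) (hB : MeasurableSet B) :
    μ A ^ (1 - t) * μ B ^ t ≤ μ ((1 - t) • A + t • B) := by
  set C := toMeasurable μ ((1 - t) • A + t • B)
  have key := hμ (A.indicator 1) (B.indicator 1) (C.indicator 1) (measurable_one.indicator hA)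
    (measurable_one.indicator hB) (measurable_one.indicator (measurableSet_toMeasurable _ _))
    fun x y => by
      by_cases hx : x ∈ A
      · by_cases hy : y ∈ B
        · have : (1 - t) • x + t • y ∈ C :=
            subset_toMeasurable _ _ (add_mem_add (smul_mem_smul_set hx) (smul_mem_smul_set hy))
          simp [hx, hy, this]
        · simp [hy, zero_rpow_of_pos ht₀]
      · simp [hx, zero_rpow_of_pos (sub_pos.2 ht₁)]
  rwa [lintegral_indicator_one hA, lintegral_indicator_one hB,
    lintegral_indicator_one (measurableSet_toMeasurable _ _), measure_toMeasurable] at key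

end PrekopaLeindler

theorem EuclideanSpace.one_add_pow_mul_le_volume_add_smul {n : ℕ}
    {A B : Set (EuclideanSpace ℝ (Fin n))} (hA : MeasurableSet A) (hB : MeasurableSet B)
    {ε : ℝ} (hε : 0 < ε) :
    ENNReal.ofReal ((1 + ε) ^ n) * (volume A ^ (1 - ε / (1 + ε)) * volume B ^ (ε / (1 + ε))) ≤
      volume (A + ε • B) := by
  set t := ε / (1 + ε)
  have ht₀ : 0 < t := by positivity
  have ht₁ : t < 1 := (div_lt_one (by positivity)).2 (by linarith)
  have hscale : A + ε • B = (1 + ε) • ((1 - t) • A + t • B) := by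
    have h₁ : (1 + ε) * (1 - t) = 1 := by simp only [t]; field_simp; ring
    have h₂ : (1 + ε) * t = ε := by simp only [t]; field_simp
    rw [smul_add, smul_smul, smul_smul, h₁, h₂, one_smul]
  rw [hscale, Measure.addHaar_smul_of_nonneg _ (by positivity), finrank_euclideanSpace_fin]
  gcongr
  exact (PrekopaLeindler.euclideanSpace ht₀ ht₁ n).measure_rpow_mul_measure_rpow_le ht₀ ht₁ hA hB

theorem mixed_volume_normalized_inequality_general (n : ℕ)
    (K L : Set (EuclideanSpace ℝ (Fin n)))
    (hK : IsCompact K) (hL : IsCompact L)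
    (hKv : volume K = 1) (hLv : volume L = 1)
    (c : ℝ)
    (hc : Filter.Tendsto
      (fun ε : ℝ => ((volume (K + ε • L)).toReal - (volume K).toReal) / ε)
      (nhdsWithin 0 (Set.Ioi 0)) (nhds c)) :
    c ≥ n := by
  refine ge_of_tendsto hc (eventually_nhdsWithin_of_forall fun ε (hε : 0 < ε) => ?_)
  have hvol :=
    EuclideanSpace.one_add_pow_mul_le_volume_add_smul hK.measurableSet hL.measurableSet hε
  rw [hKv, hLv, one_rpow, one_rpow, mul_one, mul_one,
    ofReal_le_iff_le_toReal (hK.add (hL.smul ε)).measure_lt_top.ne] at hvol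
  have hbernoulli := one_add_mul_le_pow (by linarith : (-2 : ℝ) ≤ ε) n
  rw [hKv, toReal_one, le_div_iff₀ hε]
  linarith

theorem mixed_volume_normalized_inequality (n : ℕ) (hn : 1 ≤ n)
    (K L : Set (EuclideanSpace ℝ (Fin n)))
    (hK : IsCompact K) (hKc : Convex ℝ K) (hKne : K.Nonempty)
    (hL : IsCompact L) (hLc : Convex ℝ L) (hLne : L.Nonempty)
    (hKv : volume K = 1) (hLv : volume L = 1)
    (c : ℝ)
    (hc : Filter.Tendsto
      (fun ε : ℝ => ((volume (K + ε • L)).toReal - (volume K).toReal) / ε)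
      (nhdsWithin 0 (Set.Ioi 0)) (nhds c)) :
    c ≥ n :=
  mixed_volume_normalized_inequality_general n K L hK hL hKv hLv c hc
end

section
/- (Hadwiger's homothetic projection theorem.) Let n ≥ 3 and let K and L be compact convex subsets of ℝⁿ with nonempty interiors. Suppose that for every unit vector u ∈ ℝⁿ, the orthogonal projections K_u and L_u of K and L onto the hyperplane u^⊥ are homothetic, i.e., there exist a > 0 and v ∈ u^⊥ with K_u = a·L_u + {v}. Then K and L are homothetic: there exist a > 0 and x ∈ ℝⁿ with K = aL + {x}. -/
/-!
Compare support functions `h_C w = sup_{x ∈ C} ⟪x, w⟫`. For `w ⊥ u` the support functions of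
`C` and of its projection along `u` agree, so the hypothesis gives
`h_K w = a_u h_L w + ⟪v_u, w⟫` on `u^⊥`. Since `n ≥ 3`, any two unit vectors `u, u'` have a
common unit normal `w`; comparing the widths `h(w) + h(-w)` (positive for `L`) gives
`a_u = a_{u'}`. Then `h_K - a h_L` is linear on every hyperplane `u^⊥`, and as any two vectors
lie in a common hyperplane it is linear, i.e. equal to `⟪x, ·⟫`. Hence `K` and `a • L + {x}`
have the same support function, so they coincide.
-/

open MeasureTheory Pointwise

/-- Orthogonal projection of `x` onto the hyperplane `u ^⊥` (for `u` a unit vector). -/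
noncomputable def projHyperplane {n : ℕ} (u : EuclideanSpace ℝ (Fin n))
    (x : EuclideanSpace ℝ (Fin n)) : EuclideanSpace ℝ (Fin n) :=
  x - (inner ℝ x u : ℝ) • u

open Module Topology
open scoped RealInnerProductSpace

noncomputable def supportFun {E : Type*} [NormedAddCommGroup E] [InnerProductSpace ℝ E]
    (C : Set E) (w : E) : ℝ :=
  sSup ((fun x => ⟪x, w⟫) '' C)

section SupportFun

variable {E : Type*} [NormedAddCommGroup E] [InnerProductSpace ℝ E]

theorem IsCompact.bddAbove_image_inner {C : Set E} (hC : IsCompact C) (w : E) :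
    BddAbove ((fun x => ⟪x, w⟫) '' C) :=
  (hC.image (continuous_id.inner continuous_const)).bddAbove

theorem le_supportFun {C : Set E} (hC : IsCompact C) {x : E} (hx : x ∈ C) (w : E) :
    ⟪x, w⟫ ≤ supportFun C w :=
  le_csSup (hC.bddAbove_image_inner w) (Set.mem_image_of_mem _ hx)

theorem supportFun_le {C : Set E} (hne : C.Nonempty) {w : E} {c : ℝ}
    (h : ∀ x ∈ C, ⟪x, w⟫ ≤ c) : supportFun C w ≤ c :=
  csSup_le (hne.image _) (Set.forall_mem_image.2 h)

theorem mem_iff_forall_inner_le_supportFun [CompleteSpace E] {C : Set E} (hC : IsCompact C)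
    (hCc : Convex ℝ C) (hne : C.Nonempty) (x : E) :
    x ∈ C ↔ ∀ w, ⟪x, w⟫ ≤ supportFun C w := by
  refine ⟨fun hx w => le_supportFun hC hx w, fun hx => ?_⟩
  by_contra hxC
  obtain ⟨f, s, hfC, hfx⟩ := geometric_hahn_banach_closed_point hCc hC.isClosed hxC
  set w := (InnerProductSpace.toDual ℝ E).symm f
  have hw : ∀ y, ⟪y, w⟫ = f y := fun y => by
    rw [real_inner_comm, InnerProductSpace.toDual_symm_apply]
  have hCs : supportFun C w ≤ s := supportFun_le hne fun y hy => (hw y ▸ hfC y hy).le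
  linarith [hx w, hw x]

theorem eq_of_supportFun_eq [CompleteSpace E] {C D : Set E}
    (hC : IsCompact C) (hCc : Convex ℝ C) (hCne : C.Nonempty)
    (hD : IsCompact D) (hDc : Convex ℝ D) (hDne : D.Nonempty)
    (h : ∀ w, supportFun C w = supportFun D w) : C = D := by
  ext x
  simp only [mem_iff_forall_inner_le_supportFun hC hCc hCne,
    mem_iff_forall_inner_le_supportFun hD hDc hDne, h]

theorem supportFun_smul_add_singleton {C : Set E} (hC : IsCompact C) (hne : C.Nonempty)
    {a : ℝ} (ha : 0 ≤ a) (v w : E) :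
    supportFun (a • C + {v}) w = a * supportFun C w + ⟪v, w⟫ := by
  have himage : (fun x => ⟪x, w⟫) '' (a • C + {v}) =
      (fun t => a * t + ⟪v, w⟫) '' ((fun x => ⟪x, w⟫) '' C) := by
    rw [Set.add_singleton, ← Set.image_smul, Set.image_image, Set.image_image, Set.image_image]
    refine Set.image_congr fun x _ => ?_
    rw [inner_add_left, real_inner_smul_left]
  rw [supportFun, himage]
  exact (Monotone.map_csSup_of_continuousAt (by fun_prop)
    (fun s t hst => by gcongr) (hne.image _) (hC.bddAbove_image_inner w)).symm

theorem supportFun_add_supportFun_neg_pos {L : Set E} (hL : IsCompact L)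
    (hLi : (interior L).Nonempty) {w : E} (hw : w ≠ 0) :
    0 < supportFun L w + supportFun L (-w) := by
  obtain ⟨x, hx⟩ := hLi
  have hxL : L ∈ 𝓝 x := mem_interior_iff_mem_nhds.1 hx
  have hline : ∀ᶠ t in 𝓝 (0 : ℝ), x + t • w ∈ L ∧ x - t • w ∈ L := by
    have hcont : Continuous fun t : ℝ => (x + t • w, x - t • w) := by fun_prop
    have := hcont.tendsto 0
    simp only [zero_smul, add_zero, sub_zero] at this
    exact this.eventually (prod_mem_nhds hxL hxL)
  obtain ⟨t, ⟨h₁, h₂⟩, ht⟩ :=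
    ((hline.filter_mono nhdsWithin_le_nhds).and (self_mem_nhdsWithin (s := Set.Ioi 0))).exists
  have hsum : ⟪x + t • w, w⟫ + ⟪x - t • w, -w⟫ = 2 * t * ‖w‖ ^ 2 := by
    simp only [inner_add_left, inner_sub_left, inner_neg_right, real_inner_smul_left,
      real_inner_self_eq_norm_sq]
    ring
  have hpos : 0 < 2 * t * ‖w‖ ^ 2 := by
    have : (0 : ℝ) < t := ht
    positivity
  linarith [le_supportFun hL h₁ w, le_supportFun hL h₂ (-w)]

end SupportFun

section Hyperplanes

variable {E : Type*} [NormedAddCommGroup E] [InnerProductSpace ℝ E] [FiniteDimensional ℝ E]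

theorem exists_unit_orthogonal_pair (hE : 3 ≤ finrank ℝ E) (w₁ w₂ : E) :
    ∃ u : E, ‖u‖ = 1 ∧ ⟪w₁, u⟫ = 0 ∧ ⟪w₂, u⟫ = 0 := by
  classical
  set W := Submodule.span ℝ ({w₁, w₂} : Set E)
  have hW : finrank ℝ W ≤ 2 :=
    (finrank_span_le_card _).trans (by simpa using Finset.card_le_two)
  have hWperp : Wᗮ ≠ ⊥ := by
    intro hbot
    have := W.finrank_add_finrank_orthogonal
    rw [hbot, finrank_bot] at this
    omega
  obtain ⟨u, hu, hu0⟩ := Submodule.exists_mem_ne_zero_of_ne_bot hWperp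
  have hmem : ‖u‖⁻¹ • u ∈ Wᗮ := Wᗮ.smul_mem _ hu
  exact ⟨‖u‖⁻¹ • u, norm_smul_inv_norm hu0,
    Submodule.inner_right_of_mem_orthogonal (Submodule.subset_span (by simp)) hmem,
    Submodule.inner_right_of_mem_orthogonal (Submodule.subset_span (by simp)) hmem⟩

theorem exists_inner_eq_of_forall_hyperplane (hE : 3 ≤ finrank ℝ E) {f : E → ℝ}
    (hf : ∀ u : E, ‖u‖ = 1 → ∃ v : E, ∀ w, ⟪w, u⟫ = 0 → f w = ⟪v, w⟫) :
    ∃ x : E, ∀ w, f w = ⟪x, w⟫ := by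
  choose v hv using hf
  have hadd : ∀ w₁ w₂, f (w₁ + w₂) = f w₁ + f w₂ := fun w₁ w₂ => by
    obtain ⟨u, hu, h₁, h₂⟩ := exists_unit_orthogonal_pair hE w₁ w₂
    rw [hv u hu _ (by rw [inner_add_left, h₁, h₂, add_zero]), hv u hu _ h₁, hv u hu _ h₂,
      inner_add_right]
  have hsmul : ∀ (c : ℝ) w, f (c • w) = c * f w := fun c w => by
    obtain ⟨u, hu, h, -⟩ := exists_unit_orthogonal_pair hE w w
    rw [hv u hu _ (by rw [real_inner_smul_left, h, mul_zero]), hv u hu _ h,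
      real_inner_smul_right]
  let g : E →ₗ[ℝ] ℝ := { toFun := f, map_add' := hadd, map_smul' := hsmul }
  exact ⟨(InnerProductSpace.toDual ℝ E).symm (LinearMap.toContinuousLinearMap g), fun w => by
    rw [InnerProductSpace.toDual_symm_apply]; rfl⟩

end Hyperplanes

theorem supportFun_image_projHyperplane {n : ℕ} (C : Set (EuclideanSpace ℝ (Fin n)))
    {u w : EuclideanSpace ℝ (Fin n)} (hw : ⟪w, u⟫ = 0) :
    supportFun (projHyperplane u '' C) w = supportFun C w := by
  rw [supportFun, Set.image_image]
  congr 1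
  refine Set.image_congr fun x _ => ?_
  rw [projHyperplane, inner_sub_left, real_inner_smul_left, real_inner_comm w u, hw, mul_zero,
    sub_zero]

theorem supportFun_eq_of_image_projHyperplane_eq {n : ℕ} {K L : Set (EuclideanSpace ℝ (Fin n))}
    (hL : IsCompact L) (hLne : L.Nonempty) {u v w : EuclideanSpace ℝ (Fin n)} {a : ℝ}
    (ha : 0 ≤ a) (hproj : projHyperplane u '' K = a • (projHyperplane u '' L) + {v})
    (hw : ⟪w, u⟫ = 0) :
    supportFun K w = a * supportFun L w + ⟪v, w⟫ := by
  have hcont : Continuous (projHyperplane u) := by unfold projHyperplane; fun_prop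
  rw [← supportFun_image_projHyperplane K hw, hproj,
    supportFun_smul_add_singleton (hL.image hcont) (hLne.image _) ha,
    supportFun_image_projHyperplane L hw]

theorem hadwiger_homothetic_projection (n : ℕ) (hn : 3 ≤ n)
    (K L : Set (EuclideanSpace ℝ (Fin n)))
    (hK : IsCompact K) (hKc : Convex ℝ K) (hKi : (interior K).Nonempty)
    (hL : IsCompact L) (hLc : Convex ℝ L) (hLi : (interior L).Nonempty)
    (h : ∀ u : EuclideanSpace ℝ (Fin n), ‖u‖ = 1 →
      ∃ a : ℝ, 0 < a ∧ ∃ v : EuclideanSpace ℝ (Fin n), (inner ℝ v u : ℝ) = 0 ∧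
        projHyperplane u '' K = a • (projHyperplane u '' L) + {v}) :
    ∃ a : ℝ, 0 < a ∧ ∃ x : EuclideanSpace ℝ (Fin n), K = a • L + {x} := by
  have hdim : 3 ≤ finrank ℝ (EuclideanSpace ℝ (Fin n)) := by simpa using hn
  have hKne : K.Nonempty := hKi.mono interior_subset
  have hLne : L.Nonempty := hLi.mono interior_subset
  choose a ha v _ hproj using h
  have hsupp : ∀ u hu w, ⟪w, u⟫ = 0 →
      supportFun K w = a u hu * supportFun L w + ⟪v u hu, w⟫ :=
    fun u hu w hw =>
      supportFun_eq_of_image_projHyperplane_eq hL hLne (ha u hu).le (hproj u hu) hw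
  have hwidth : ∀ u hu w, ⟪w, u⟫ = 0 → supportFun K w + supportFun K (-w) =
      a u hu * (supportFun L w + supportFun L (-w)) := fun u hu w hw => by
    rw [hsupp u hu w hw, hsupp u hu (-w) (by rw [inner_neg_left, hw, neg_zero]), inner_neg_right]
    ring
  obtain ⟨u₀, hu₀, -⟩ := exists_unit_orthogonal_pair hdim 0 0
  have ha_const : ∀ u hu, a u hu = a u₀ hu₀ := fun u hu => by
    obtain ⟨w, hw, hwu, hwu₀⟩ := exists_unit_orthogonal_pair hdim u u₀
    have hL_width := supportFun_add_supportFun_neg_pos hL hLi (w := w) (by rintro rfl; simp at hw)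
    refine mul_right_cancel₀ hL_width.ne'
      ((hwidth u hu w ?_).symm.trans (hwidth u₀ hu₀ w ?_)) <;> rwa [real_inner_comm]
  obtain ⟨x, hx⟩ := exists_inner_eq_of_forall_hyperplane hdim
    (f := fun w => supportFun K w - a u₀ hu₀ * supportFun L w)
    fun u hu => ⟨v u hu, fun w hw => by rw [hsupp u hu w hw, ha_const]; ring⟩
  refine ⟨a u₀ hu₀, ha u₀ hu₀, x, eq_of_supportFun_eq hK hKc hKne
    ((hL.smul _).add isCompact_singleton) ((hLc.smul _).add (convex_singleton x))
    (hLne.smul_set.add (Set.singleton_nonempty x)) fun w => ?_⟩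
  rw [supportFun_smul_add_singleton hL hLne (ha u₀ hu₀).le, ← hx]
  ring
end
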